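/- arXiv:1911.01657 — 2 statements merged into one kernel-verified Lean document; each statement's English description precedes it below -/
import Mathlib

section
/- Let A = (A₁,…,A_N) : ℝ^N → ℝ^N be continuous and let y = (y₁,…,y_N) ∈ ℝ^N. Then there exists a continuous function φ_y : ℝ^N → ℝ such that the following N partial derivatives of φ_y exist and satisfy: ∂₁φ_y(x) = −A₁(x) for all x ∈ ℝ^N, and for each n = 2,…,N, ∂_nφ_y(y₁,…,y_{n−1}, x_n,…,x_N) = −A_n(y₁,…,y_{n−1}, x_n,…,x_N) for all (x_n,…,x_N) ∈ ℝ^{N−n+1}. In particular, the full gradient of φ_y exists at the point y and ∇φ_y(y) = −A(y). -/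
/-
Integrate `-A` along the staircase path from `y` to `x` that moves the coordinates in increasing
order: `φ(x) = -∑ₖ ∫_{yₖ}^{xₖ} Aₖ(y₁, …, y_{k-1}, t, x_{k+1}, …, x_N) dt`. At a point `x` agreeing
with `y` in the coordinates before `n`, moving `x` in direction `n` leaves the terms `k < n` at
zero and the terms `k > n` unchanged (their integrands read `y n`, not `x n`), so only the `n`-th
term varies, and the fundamental theorem of calculus gives `∂ₙφ(x) = -Aₙ(x)`.
-/

open MeasureTheory Complex Filter Topology Metric

noncomputable section

abbrev RN (N : ℕ) := EuclideanSpace ℝ (Fin N)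

open intervalIntegral

namespace Rephasing

theorem add_smul_single_apply {ι : Type*} [DecidableEq ι] (x : EuclideanSpace ℝ ι) (n m : ι)
    (s : ℝ) :
    (x + s • EuclideanSpace.single n 1 : EuclideanSpace ℝ ι) m =
      if m = n then x n + s else x m := by
  by_cases h : m = n
  · subst h; simp
  · simp [h]

variable {ι : Type*} [LinearOrder ι]

def stairPoint (y x : EuclideanSpace ℝ ι) (k : ι) (t : ℝ) : EuclideanSpace ℝ ι :=
  WithLp.toLp 2 fun m => if m < k then y m else if m = k then t else x m

@[simp]
theorem stairPoint_apply (y x : EuclideanSpace ℝ ι) (k : ι) (t : ℝ) (m : ι) :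
    stairPoint y x k t m = if m < k then y m else if m = k then t else x m :=
  rfl

theorem continuous_stairPoint (y : EuclideanSpace ℝ ι) (k : ι) :
    Continuous fun p : EuclideanSpace ℝ ι × ℝ => stairPoint y p.1 k p.2 := by
  refine (PiLp.continuous_toLp 2 _).comp (continuous_pi fun m => ?_)
  split_ifs
  · exact continuous_const
  · exact continuous_snd
  · exact ((continuous_apply m).comp (PiLp.continuous_ofLp 2 _)).comp continuous_fst

theorem stairPoint_congr {y x x' : EuclideanSpace ℝ ι} {k : ι} (t : ℝ)
    (h : ∀ m, k < m → x m = x' m) : stairPoint y x k t = stairPoint y x' k t := by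
  ext m
  simp only [stairPoint_apply]
  split_ifs with h₁ h₂
  · rfl
  · rfl
  · exact h m (lt_of_le_of_ne (not_lt.1 h₁) (Ne.symm h₂))

theorem stairPoint_self {y x : EuclideanSpace ℝ ι} {k : ι} (h : ∀ m < k, x m = y m) :
    stairPoint y x k (x k) = x := by
  ext m
  simp only [stairPoint_apply]
  split_ifs with h₁ h₂
  · exact (h m h₁).symm
  · rw [h₂]
  · rfl

variable [Fintype ι]

def rephasing (A : EuclideanSpace ℝ ι → EuclideanSpace ℝ ι) (y x : EuclideanSpace ℝ ι) : ℝ :=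
  -∑ k, ∫ t in y k..x k, A (stairPoint y x k t) k

variable {A : EuclideanSpace ℝ ι → EuclideanSpace ℝ ι}

theorem continuous_rephasing (hA : Continuous A) (y : EuclideanSpace ℝ ι) :
    Continuous (rephasing A y) := by
  have hcoord (k : ι) : Continuous fun z : EuclideanSpace ℝ ι => z k :=
    (continuous_apply k).comp (PiLp.continuous_ofLp 2 _)
  refine (continuous_finsetSum _ fun k _ => ?_).neg
  exact continuous_parametric_intervalIntegral_of_continuous
    (f := fun z t => A (stairPoint y z k t) k)
    ((hcoord k).comp (hA.comp (continuous_stairPoint y k))) (hcoord k)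

variable [DecidableEq ι] {y x : EuclideanSpace ℝ ι} {n : ι}

theorem rephasing_add_smul_single (hx : ∀ m < n, x m = y m) (s : ℝ) :
    rephasing A y (x + s • EuclideanSpace.single n 1) =
      -((∫ t in y n..x n + s, A (stairPoint y x n t) n) +
        ∑ k ∈ Finset.univ.erase n, ∫ t in y k..x k, A (stairPoint y x k t) k) := by
  have hstair (k : ι) (hk : n ≤ k) (t : ℝ) :
      stairPoint y (x + s • EuclideanSpace.single n 1) k t = stairPoint y x k t :=
    stairPoint_congr t fun m hm => by
      rw [add_smul_single_apply, if_neg (lt_of_le_of_lt hk hm).ne']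
  rw [rephasing, ← Finset.add_sum_erase _ _ (Finset.mem_univ n)]
  congr 2
  · simp only [add_smul_single_apply, if_true, hstair n le_rfl]
  refine Finset.sum_congr rfl fun k hk => ?_
  have hkn := Finset.ne_of_mem_erase hk
  rcases hkn.lt_or_gt with hlt | hgt
  · simp only [add_smul_single_apply, if_neg hkn, hx k hlt, integral_same]
  · simp only [add_smul_single_apply, if_neg hkn, hstair k hgt.le]

theorem hasLineDerivAt_rephasing (hA : Continuous A) (hx : ∀ m < n, x m = y m) :
    HasLineDerivAt ℝ (rephasing A y) (-(A x n)) x (EuclideanSpace.single n 1) := by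
  set g : ℝ → ℝ := fun t => A (stairPoint y x n t) n
  have hg : Continuous g :=
    ((continuous_apply n).comp (PiLp.continuous_ofLp 2 _)).comp
      (hA.comp ((continuous_stairPoint y n).comp (continuous_const.prodMk continuous_id)))
  have hgx : g (x n) = A x n := by simp only [g, stairPoint_self hx]
  have hprim : HasDerivAt (fun s => ∫ t in y n..x n + s, g t) (A x n) 0 := by
    have := (hg.integral_hasStrictDerivAt (y n) (x n + 0)).hasDerivAt.comp_const_add (x n) 0
    rwa [add_zero, hgx] at this
  unfold HasLineDerivAt
  simp only [rephasing_add_smul_single hx]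
  exact (hprim.add_const _).neg

end Rephasing

open Rephasing in
/-- Lemma on the re-phasing function. Let `A : ℝ^N → ℝ^N` be continuous
and `y ∈ ℝ^N`. Then there is a continuous `φ_y : ℝ^N → ℝ` such that `∂₁φ_y = −A₁`
everywhere, and for each `n`, `∂_nφ_y(x) = −A_n(x)` at every point `x` with
`x₁ = y₁, …, x_{n−1} = y_{n−1}`. In particular all partial derivatives of `φ_y`
exist at `y` and `∇φ_y(y) = −A(y)`. -/
theorem exists_rephasing_function (N : ℕ) (A : RN N → RN N) (hA : Continuous A)
    (y : RN N) :
    ∃ φ : RN N → ℝ, Continuous φ ∧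
      (∀ (n : Fin N) (x : RN N), (∀ m : Fin N, m < n → x m = y m) →
        HasLineDerivAt ℝ φ (-(A x n)) x (EuclideanSpace.single n 1)) ∧
      (∀ n : Fin N, HasLineDerivAt ℝ φ (-(A y n)) y (EuclideanSpace.single n 1)) :=
  ⟨rephasing A y, continuous_rephasing hA y, fun _ _ hx => hasLineDerivAt_rephasing hA hx,
    fun _ => hasLineDerivAt_rephasing hA fun _ _ => rfl⟩

end
end

section
/- Let y ∈ ℝ^N and let F = (F₁,…,F_N) : ℝ^N → ℝ^N be a C¹ vector field such that for each n = 1,…,N, F_n(x) = 0 whenever x₁ = y₁, …, x_{n−1} = y_{n−1} (for n = 1 this means F₁ ≡ 0 on ℝ^N). Set B_{mn} = ∂_n F_m − ∂_m F_n and assume each B_{mn} is bounded. Then for all x ∈ ℝ^N, |F(x)| ≤ ‖B‖_∞ |x − y|, where ‖B‖_∞² = Σ_{n=1}^N Σ_{m<n} ‖B_{mn}‖_{L^∞}². (In the paper F is the corrected magnetic potential A_y = A + ∇φ_y built from a C¹ potential A via the re-phasing function φ_y, in which case B = dA is the magnetic field, and the conclusion reads |A_y(x)| ≤ ‖dA‖_∞|x−y|.)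 -/
/-!
Write `q_k` for the point whose first `k` coordinates are those of `y` and the others those of
`x`. Since `F_n(q_n) = 0`, the component `F_n(x)` telescopes into the increments
`F_n(q_m) - F_n(q_{m+1})`, `m < n`, each taken along the `m`-th coordinate direction on a segment
where the first `m` coordinates agree with `y`. There `F_m` vanishes identically and does not vary
in the direction `e_n`, so `∂_m F_n = -B_{mn}`, and the mean value theorem bounds the increment by
`‖B_{mn}‖_∞ |x_m - y_m|`. Cauchy–Schwarz in `m`, then summing squares over `n`, gives the bound.
-/

open MeasureTheory Complex Filter Topology Metric

noncomputable section

/-- the component `B_{mn} = ∂_n F_m − ∂_m F_n` of the field `B = dF` -/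
def fieldComp {N : ℕ} (F : RN N → RN N) (m n : Fin N) (x : RN N) : ℝ :=
  fderiv ℝ (fun z => F z m) x (EuclideanSpace.single n 1)
    - fderiv ℝ (fun z => F z n) x (EuclideanSpace.single m 1)

theorem DifferentiableAt.fderiv_apply_eq_zero_of_forall_add_smul_eq
    {E G : Type*} [NormedAddCommGroup E] [NormedSpace ℝ E] [NormedAddCommGroup G]
    [NormedSpace ℝ G] {f : E → G} {p v : E} (hf : DifferentiableAt ℝ f p)
    (hline : ∀ t : ℝ, f (p + t • v) = f p) : fderiv ℝ f p v = 0 := by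
  rw [← hf.lineDeriv_eq_fderiv, lineDeriv, funext hline, deriv_const]

theorem Fin.sum_Iio_sub' {M : Type*} [AddCommGroup M] {N : ℕ} (G : ℕ → M) (n : Fin N) :
    ∑ m ∈ Finset.Iio n, (G m - G (m + 1)) = G 0 - G n := by
  have h := Finset.sum_map (Finset.Iio n) Fin.valEmbedding fun i => G i - G (i + 1)
  rwa [Fin.map_valEmbedding_Iio, Nat.Iio_eq_range, Finset.sum_range_sub', eq_comm] at h

theorem EuclideanSpace.norm_le_sqrt_sum_sq_mul_norm {ι : Type*} [Fintype ι]
    {v w : EuclideanSpace ℝ ι} (s : ι → Finset ι) (c : ι → ι → ℝ)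
    (hv : ∀ n, |v n| ≤ ∑ m ∈ s n, c m n * |w m|) :
    ‖v‖ ≤ Real.sqrt (∑ n, ∑ m ∈ s n, c m n ^ 2) * ‖w‖ := by
  have hcomp (n : ι) : v n ^ 2 ≤ (∑ m ∈ s n, c m n ^ 2) * ‖w‖ ^ 2 := calc
    v n ^ 2 = |v n| ^ 2 := (sq_abs _).symm
    _ ≤ (∑ m ∈ s n, c m n * |w m|) ^ 2 := by gcongr; exact hv n
    _ ≤ (∑ m ∈ s n, c m n ^ 2) * ∑ m ∈ s n, |w m| ^ 2 := Finset.sum_mul_sq_le_sq_mul_sq _ _ _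
    _ ≤ (∑ m ∈ s n, c m n ^ 2) * ‖w‖ ^ 2 := by
      gcongr
      simp_rw [EuclideanSpace.norm_sq_eq, Real.norm_eq_abs]
      exact Finset.sum_le_sum_of_subset_of_nonneg (Finset.subset_univ _) fun m _ _ => sq_nonneg _
  have hsum_nonneg : 0 ≤ ∑ n, ∑ m ∈ s n, c m n ^ 2 :=
    Finset.sum_nonneg fun n _ => Finset.sum_nonneg fun m _ => sq_nonneg _
  rw [← Real.sqrt_sq (norm_nonneg w), ← Real.sqrt_mul hsum_nonneg, EuclideanSpace.norm_eq,
    Finset.sum_mul]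
  exact Real.sqrt_le_sqrt (Finset.sum_le_sum fun n _ => by simpa [Real.norm_eq_abs] using hcomp n)

section CorrectedPotential

variable {N : ℕ}

def lowerSlice (y : RN N) (m : Fin N) : Set (RN N) := {z | ∀ j < m, z j = y j}

lemma convex_lowerSlice (y : RN N) (m : Fin N) : Convex ℝ (lowerSlice y m) := by
  intro a ha b hb s t _ _ hst j hj
  simp [ha j hj, hb j hj, ← add_mul, hst]

lemma add_smul_single_mem_lowerSlice {y z : RN N} {m n : Fin N} (hmn : m ≤ n)
    (hz : z ∈ lowerSlice y m) (t : ℝ) : z + t • EuclideanSpace.single n 1 ∈ lowerSlice y m := by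
  intro j hj
  simp [(hj.trans_le hmn).ne, hz j hj]

def splice (y x : RN N) (k : ℕ) : RN N := WithLp.toLp 2 fun j => if (j : ℕ) < k then y j else x j

lemma splice_zero (y x : RN N) : splice y x 0 = x := by
  ext j; simp [splice]

lemma splice_mem_lowerSlice (y x : RN N) {m : Fin N} {k : ℕ} (hmk : m ≤ k) :
    splice y x k ∈ lowerSlice y m := by
  intro j hj
  simp [splice, (Fin.lt_def.1 hj).trans_le hmk]

lemma splice_succ (y x : RN N) (m : Fin N) :
    splice y x (m + 1) = splice y x m + (y m - x m) • EuclideanSpace.single m 1 := by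
  ext j
  rcases lt_trichotomy j m with hj | rfl | hj
  · simp [splice, hj, hj.ne, hj.le]
  · simp [splice]
  · simp [splice, hj.ne', hj.not_ge, hj.not_gt]

variable {y : RN N} {F : RN N → RN N}

lemma fderiv_apply_single_eq_neg_fieldComp (hF : ContDiff ℝ 1 F)
    (hvanish : ∀ (n : Fin N) (x : RN N), (∀ m : Fin N, m < n → x m = y m) → F x n = 0)
    {m n : Fin N} (hmn : m < n) {z : RN N} (hz : z ∈ lowerSlice y m) :
    fderiv ℝ (fun z => F z n) z (EuclideanSpace.single m 1) = -fieldComp F m n z := by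
  have hdiff : DifferentiableAt ℝ (fun z => F z m) z := by
    have := hF.differentiable one_ne_zero
    fun_prop
  have hzero : fderiv ℝ (fun z => F z m) z (EuclideanSpace.single n 1) = 0 :=
    hdiff.fderiv_apply_eq_zero_of_forall_add_smul_eq fun t => by
      rw [hvanish m _ (add_smul_single_mem_lowerSlice hmn.le hz t), hvanish m z hz]
  rw [fieldComp, hzero, zero_sub, neg_neg]

lemma abs_apply_add_smul_single_sub_apply_le (hF : ContDiff ℝ 1 F)
    (hvanish : ∀ (n : Fin N) (x : RN N), (∀ m : Fin N, m < n → x m = y m) → F x n = 0)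
    {m n : Fin N} (hbdd : BddAbove (Set.range fun x => |fieldComp F m n x|)) (hmn : m < n)
    {p : RN N} (hp : p ∈ lowerSlice y m) (t : ℝ) :
    |F (p + t • EuclideanSpace.single m 1) n - F p n| ≤ (⨆ z, |fieldComp F m n z|) * |t| := by
  have hdiff : Differentiable ℝ (fun z => F z n) := by
    have := hF.differentiable one_ne_zero
    fun_prop
  have hp' := add_smul_single_mem_lowerSlice le_rfl hp t
  obtain ⟨z, hz, hmvt⟩ := domain_mvt (f := fun z => F z n)
    (fun z _ => (hdiff z).hasFDerivAt.hasFDerivWithinAt) (convex_lowerSlice y m) hp hp'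
  have hz_mem : z ∈ lowerSlice y m := (convex_lowerSlice y m).segment_subset hp hp' hz
  rw [hmvt, add_sub_cancel_left, map_smul,
    fderiv_apply_single_eq_neg_fieldComp hF hvanish hmn hz_mem, smul_eq_mul, abs_mul, abs_neg,
    mul_comm]
  exact mul_le_mul_of_nonneg_right (le_ciSup hbdd z) (abs_nonneg t)

lemma abs_apply_le_sum_iSup_mul_abs_sub (hF : ContDiff ℝ 1 F)
    (hvanish : ∀ (n : Fin N) (x : RN N), (∀ m : Fin N, m < n → x m = y m) → F x n = 0)
    (hbdd : ∀ m n : Fin N, BddAbove (Set.range fun x => |fieldComp F m n x|))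
    (n : Fin N) (x : RN N) :
    |F x n| ≤ ∑ m ∈ Finset.univ.filter (· < n), (⨆ z, |fieldComp F m n z|) * |x m - y m| := by
  have htelescope :
      F x n = ∑ m ∈ Finset.Iio n, (F (splice y x m) n - F (splice y x (m + 1)) n) := by
    rw [Fin.sum_Iio_sub' (fun k => F (splice y x k) n), splice_zero,
      hvanish n _ (splice_mem_lowerSlice y x le_rfl), sub_zero]
  rw [htelescope, Finset.filter_gt_eq_Iio]
  refine (Finset.abs_sum_le_sum_abs _ _).trans (Finset.sum_le_sum fun m hm => ?_)
  rw [splice_succ, abs_sub_comm, abs_sub_comm (x m)]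
  exact abs_apply_add_smul_single_sub_apply_le hF hvanish (hbdd m n) (Finset.mem_Iio.1 hm)
    (splice_mem_lowerSlice y x le_rfl) _

end CorrectedPotential

/-- linear bound on the corrected potential. Let `y ∈ ℝ^N` and let
`F : ℝ^N → ℝ^N` be a `C¹` vector field such that `F_n(x) = 0` whenever
`x₁ = y₁, …, x_{n−1} = y_{n−1}` (for `n = 1`, `F₁ ≡ 0`). Set `B_{mn} = ∂_nF_m − ∂_mF_n`
and assume each `B_{mn}` is bounded. Then `|F(x)| ≤ ‖B‖_∞ |x − y|` for all `x`, where
`‖B‖_∞² = Σ_n Σ_{m<n} ‖B_{mn}‖_∞²`. -/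
theorem corrected_potential_linear_bound (N : ℕ) (y : RN N) (F : RN N → RN N)
    (hF : ContDiff ℝ 1 F)
    (hvanish : ∀ (n : Fin N) (x : RN N), (∀ m : Fin N, m < n → x m = y m) → F x n = 0)
    (hbdd : ∀ m n : Fin N, BddAbove (Set.range fun x => |fieldComp F m n x|)) :
    ∀ x : RN N,
      ‖F x‖ ≤ Real.sqrt
          (∑ n : Fin N, ∑ m ∈ Finset.univ.filter (· < n),
            (⨆ x : RN N, |fieldComp F m n x|) ^ 2) * ‖x - y‖ := by
  intro x
  refine EuclideanSpace.norm_le_sqrt_sum_sq_mul_norm (fun n => Finset.univ.filter (· < n))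
    (fun m n => ⨆ x, |fieldComp F m n x|) fun n => ?_
  simpa only [PiLp.sub_apply] using abs_apply_le_sum_iSup_mul_abs_sub hF hvanish hbdd n x

end
end
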